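/- arXiv:1401.5582 — 6 statements merged into one kernel-verified Lean document; each statement's English description precedes it below -/
import Mathlib

section
/- For all positive reals M and N, max(min(M/3, N/7), min(2M/7, N/6)) ≤ (2M+N)/13, with equality if and only if M/N = 3/7 or M/N = 7/12. -/
theorem dof_Y_le_counting (M N : ℝ) (hM : 0 < M) (hN : 0 < N) :
    max (min (M / 3) (N / 7)) (min (2 * M / 7) (N / 6)) ≤ (2 * M + N) / 13 ∧
    (max (min (M / 3) (N / 7)) (min (2 * M / 7) (N / 6)) = (2 * M + N) / 13 ↔
      M / N = 3 / 7 ∨ M / N = 7 / 12) := by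
  have hN' : (N : ℝ) ≠ 0 := ne_of_gt hN
  constructor
  · apply max_le
    · have h1 := min_le_left (M / 3) (N / 7)
      have h2 := min_le_right (M / 3) (N / 7)
      linarith
    · have h1 := min_le_left (2 * M / 7) (N / 6)
      have h2 := min_le_right (2 * M / 7) (N / 6)
      linarith
  · constructor
    · intro h
      rcases max_choice (min (M / 3) (N / 7)) (min (2 * M / 7) (N / 6)) with hc | hc <;>
        rw [hc] at h
      · left
        rw [div_eq_div_iff hN' (by norm_num : (7:ℝ) ≠ 0)]
        rcases min_choice (M / 3) (N / 7) with hm | hm <;> rw [hm] at h <;> linarith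
      · right
        rw [div_eq_div_iff hN' (by norm_num : (12:ℝ) ≠ 0)]
        rcases min_choice (2 * M / 7) (N / 6) with hm | hm <;> rw [hm] at h <;> linarith
    · intro h
      rcases h with h | h
      · rw [div_eq_div_iff hN' (by norm_num : (7:ℝ) ≠ 0)] at h
        have e1 : M / 3 = N / 7 := by linarith
        have e2 : min (2 * M / 7) (N / 6) ≤ N / 7 :=
          le_trans (min_le_left _ _) (by linarith)
        rw [e1, min_self, max_eq_left e2]
        linarith
      · rw [div_eq_div_iff hN' (by norm_num : (12:ℝ) ≠ 0)] at h
        have e1 : min (M / 3) (N / 7) = N / 7 := min_eq_right (by linarith)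
        have e2 : 2 * M / 7 = N / 6 := by linarith
        rw [e1, e2, min_self, max_eq_right (by linarith : N / 7 ≤ N / 6)]
        linarith
end

section
/- Let H₁, H₂, H₃, H₄ be the specific 7×3 integer matrices H₁ = [[1,0,0],[0,1,0],[0,0,1],[0,0,0],[0,0,0],[0,0,0],[0,0,0]], H₂ = [[0,0,0],[0,0,0],[0,0,0],[1,0,0],[0,1,0],[0,0,1],[0,0,0]], H₃ = [[0,1,0],[0,0,1],[0,0,0],[0,1,0],[0,0,1],[0,0,0],[1,0,0]], H₄ = [[0,1,0],[0,1,1],[1,0,0],[0,1,0],[0,0,1],[1,0,1],[0,1,1]]. Then the 35×36 block matrix H whose five block-rows (each of 7 rows) are given by: row-block 1 = [H₁,O,O,H₂,O,O,O,O,H₃,O,O,H₄], row-block 2 = [O,H₁,O,O,O,O,H₃,O,H₃,O,O,H₄], row-block 3 = [O,O,H₁,O,O,O,O,O,H₃,H₄,O,H₄], row-block 4 = [O,O,O,O,H₂,O,O,H₃,H₃,O,O,H₄], row-block 5 = [O,O,O,O,O,H₂,O,O,H₃,O,H₄,H₄] (O denoting the 7×3 zero matrix), has rank 35 (full row rank)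 over the rationals. -/
open Matrix

/-- The four specific 7×3 channel matrices of the (M,N)=(3,7) scheme. -/
def H1 : Matrix (Fin 7) (Fin 3) ℚ :=
  !![1,0,0; 0,1,0; 0,0,1; 0,0,0; 0,0,0; 0,0,0; 0,0,0]
def H2 : Matrix (Fin 7) (Fin 3) ℚ :=
  !![0,0,0; 0,0,0; 0,0,0; 1,0,0; 0,1,0; 0,0,1; 0,0,0]
def H3 : Matrix (Fin 7) (Fin 3) ℚ :=
  !![0,1,0; 0,0,1; 0,0,0; 0,1,0; 0,0,1; 0,0,0; 1,0,0]
def H4 : Matrix (Fin 7) (Fin 3) ℚ :=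
  !![0,1,0; 0,1,1; 1,0,0; 0,1,0; 0,0,1; 1,0,1; 0,1,1]

/-- The 5×12 arrangement of 7×3 blocks. -/
def Yblocks : Fin 5 → Fin 12 → Matrix (Fin 7) (Fin 3) ℚ :=
  ![![H1, 0, 0, H2, 0, 0, 0, 0, H3, 0, 0, H4],
    ![0, H1, 0, 0, 0, 0, H3, 0, H3, 0, 0, H4],
    ![0, 0, H1, 0, 0, 0, 0, 0, H3, H4, 0, H4],
    ![0, 0, 0, 0, H2, 0, 0, H3, H3, 0, 0, H4],
    ![0, 0, 0, 0, 0, H2, 0, 0, H3, 0, H4, H4]]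

/-- The 35×36 alignment matrix, indexed by (row-block, row) and (column-block, column). -/
def Hbig : Matrix (Fin 5 × Fin 7) (Fin 12 × Fin 3) ℚ :=
  Matrix.of fun ri cj => Yblocks ri.1 cj.1 ri.2 cj.2


def H1z : Matrix (Fin 7) (Fin 3) ℤ :=
  !![1,0,0; 0,1,0; 0,0,1; 0,0,0; 0,0,0; 0,0,0; 0,0,0]
def H2z : Matrix (Fin 7) (Fin 3) ℤ :=
  !![0,0,0; 0,0,0; 0,0,0; 1,0,0; 0,1,0; 0,0,1; 0,0,0]
def H3z : Matrix (Fin 7) (Fin 3) ℤ :=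
  !![0,1,0; 0,0,1; 0,0,0; 0,1,0; 0,0,1; 0,0,0; 1,0,0]
def H4z : Matrix (Fin 7) (Fin 3) ℤ :=
  !![0,1,0; 0,1,1; 1,0,0; 0,1,0; 0,0,1; 1,0,1; 0,1,1]

def Yblocksz : Fin 5 → Fin 12 → Matrix (Fin 7) (Fin 3) ℤ :=
  ![![H1z, 0, 0, H2z, 0, 0, 0, 0, H3z, 0, 0, H4z],
    ![0, H1z, 0, 0, 0, 0, H3z, 0, H3z, 0, 0, H4z],
    ![0, 0, H1z, 0, 0, 0, 0, 0, H3z, H4z, 0, H4z],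
    ![0, 0, 0, 0, H2z, 0, 0, H3z, H3z, 0, 0, H4z],
    ![0, 0, 0, 0, 0, H2z, 0, 0, H3z, 0, H4z, H4z]]

def Hbigz : Matrix (Fin 5 × Fin 7) (Fin 12 × Fin 3) ℤ :=
  Matrix.of fun ri cj => Yblocksz ri.1 cj.1 ri.2 cj.2

set_option maxHeartbeats 2000000 in
def Bdataz : List (List ℤ) := [[17, 0, 0, -1, 1, 0, -9, 0, -1, 0, -1, 2, 5, 0, 0, 0, 1, -11, -7, -2, 10, -1, -1, -4, 0, 1, 0, 0, -3, 4, 1, 0, 0, -1, -2],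
  [0, 18, 0, 0, 0, 0, -18, 0, 0, 0, 0, 0, 0, 0, 0, 0, 0, 0, 0, 0, 0, 0, 0, 0, 0, 0, 0, 0, 0, -18, 0, 0, 0, 0, 18],
  [0, 0, 18, 0, 0, 0, 0, 0, 0, 0, 0, 0, 0, 0, 0, 0, 0, 0, 0, 0, 0, 0, 0, -18, 0, 0, 0, 0, 0, 0, 0, 0, 0, 0, 0],
  [0, 0, 0, 0, 0, 0, 0, 18, 0, 0, -18, 0, 0, 0, 0, 0, 0, 0, 0, 0, 0, 0, 0, 0, 0, 0, 0, 0, 0, 0, 0, 0, 0, 0, 0],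
  [-1, 0, 0, -1, 1, 0, -9, 0, 17, 0, -1, -16, 5, 0, 0, 0, 1, 7, 11, -2, -8, -1, -1, -4, 0, 1, 0, 0, -3, -14, 1, 0, 0, -1, 16],
  [0, 0, 0, 0, 0, 0, 0, 0, 0, 18, 0, 0, 0, 0, 0, 0, 0, 0, 0, 0, 0, 0, 0, -18, 0, 0, 0, 0, 0, 0, 0, 0, 0, 0, 0],
  [0, 0, 0, 0, 0, 0, 0, 0, 0, 0, 0, 0, 0, 0, 18, 0, 0, -18, 0, 0, 0, 0, 0, 0, 0, 0, 0, 0, 0, 0, 0, 0, 0, 0, 0],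
  [0, 0, 0, 0, 0, 0, 0, 0, 0, 0, 0, 0, 0, 0, 0, 18, 0, 0, 0, 0, -18, 0, 0, 0, 0, 0, 0, 0, 0, -18, 0, 0, 0, 0, 18],
  [1, 0, 0, 1, -1, 0, -9, 0, 1, 0, 1, -2, 13, 0, 0, 0, 17, -7, 7, -16, 8, 1, 1, -14, 0, -1, 0, 0, 3, -4, -1, 0, 0, 1, 2],
  [-1, 0, 0, 17, 1, 0, -9, 0, -1, 0, -1, 2, 5, 0, 0, 0, 1, -11, -7, -2, 10, -1, -1, -4, 0, 1, 0, 0, -3, 4, 1, 0, 0, -1, -2],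
  [1, 0, 0, 1, 17, 0, -9, 0, 1, 0, 1, -2, -5, 0, 0, 0, -1, -7, -11, 2, 8, 1, 1, 4, 0, -1, 0, 0, 3, -4, -1, 0, 0, 1, 2],
  [0, 0, 0, 0, 0, 18, 0, 0, 0, 0, 0, 0, -18, 0, 0, 0, 0, 0, 0, 0, 0, 0, 0, 0, 0, 0, 0, 0, 0, 0, 0, 0, 0, 0, 0],
  [0, 0, 0, 0, 0, 0, 0, 0, 0, 0, 0, 0, 0, 0, 0, 0, 0, 0, 0, 0, 0, -18, 0, 0, 18, 0, 0, 0, 0, 0, 0, 0, 0, 0, 0],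
  [1, 0, 0, 1, -1, 0, 9, 0, 1, 0, 1, -2, -5, 0, 0, 0, -1, -7, -11, 2, 8, 1, -17, 4, 0, 17, 0, 0, 3, 14, -1, 0, 0, 1, -16],
  [0, 0, 0, 0, 0, 0, 0, 0, 0, 0, 0, 0, -18, 0, 0, 0, 0, 0, 0, 0, 0, 0, 0, 0, 0, 0, 18, 0, 0, 0, 0, 0, 0, 0, 0],
  [0, 0, 0, 0, 0, 0, 0, 0, 0, 0, 0, 0, 0, 0, 0, 0, 0, 0, 0, 0, 0, 0, 0, 0, 0, 0, 0, 0, -18, 0, 0, 18, 0, 0, 0],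
  [0, 0, 0, 0, 0, 0, 0, 0, 0, 0, 0, 0, 0, 0, 0, 0, 0, -18, -18, 0, 18, 0, 0, 0, 0, 0, 0, 0, 18, 0, 0, 0, 18, 0, -18],
  [-1, 0, 0, -1, 1, 0, 9, 0, -1, 0, -1, 2, -13, 0, 0, 0, 1, -11, -7, -2, 10, -1, -1, 14, 0, 1, 0, 0, 15, 4, -17, 0, 0, 17, -20],
  [0, 0, 0, 0, 0, 0, -18, 0, 0, 0, 0, 0, 0, 18, 0, 0, 0, 0, 0, 0, 0, 0, 0, 0, 0, 0, 0, 0, 0, 0, 0, 0, 0, 0, 0],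
  [-1, 0, 0, -1, 1, 0, -9, 0, -1, 0, 17, 2, 5, 0, 0, 0, 1, -11, -7, -2, 10, -1, -1, -4, 0, 1, 0, 0, -3, 4, 1, 0, 0, -1, -2],
  [1, 0, 0, 1, -1, 0, -9, 0, 1, 0, 1, 16, -5, 0, 0, 0, -1, -7, -11, 2, 8, 1, 1, 4, 0, -1, 0, 0, 3, -4, -1, 0, 0, 1, 2],
  [0, 0, 0, 0, 0, 0, -18, 0, 0, 0, 0, 0, 0, 0, 0, 0, 0, 0, 0, 0, 0, 0, 0, 0, 0, 0, 0, 18, 0, 0, 0, 0, 0, 0, 0],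
  [-1, 0, 0, -1, 1, 0, -9, 0, -1, 0, -1, 2, 5, 0, 0, 0, 1, -11, -7, -2, 10, 17, -1, -4, 0, 1, 0, 0, -3, 4, 1, 0, 0, -1, -2],
  [0, 0, 0, 0, 0, 0, -18, 0, 0, 0, 0, 0, 0, 0, 0, 0, 0, 0, 0, 0, 0, 0, 18, 0, 0, 0, 0, 0, 0, -18, 0, 0, 0, 0, 18],
  [-1, 0, 0, -1, 1, 0, 9, 0, -1, 0, -1, 2, -13, 0, 0, 0, 1, 7, 11, -2, -8, -1, -1, 14, 0, 1, 0, 0, -3, -14, 1, 0, 0, -1, 16],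
  [0, 0, 0, 0, 0, 0, 0, 0, 0, 0, 0, 0, 0, 0, 0, 0, 0, 18, 18, 0, -18, 0, 0, 0, 0, 0, 0, 0, 0, -18, 0, 0, 0, 0, 18],
  [-1, 0, 0, -1, 1, 0, 9, 0, -1, 0, -1, 2, -13, 0, 0, 0, 1, 7, 11, -2, -8, -1, -1, 14, 0, 1, 0, 0, -3, 4, 1, 0, 0, -1, -2],
  [-1, 0, 0, -1, 1, 0, 9, 0, -1, 0, -1, 2, -13, 0, 0, 0, 1, 7, -7, 16, -8, -1, -1, -4, 0, 1, 0, 0, -3, 4, 1, 0, 0, -1, -2],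
  [-1, 0, 0, -1, 1, 0, -9, 0, -1, 0, -1, 2, 5, 0, 0, 0, 1, 7, -7, -2, 10, -1, -1, -4, 0, 1, 0, 0, -3, 4, 1, 0, 0, -1, -2],
  [1, 0, 0, 1, -1, 0, -9, 0, 1, 0, 1, -2, -5, 0, 0, 0, -1, -7, 7, 2, 8, 1, 1, 4, 0, -1, 0, 0, 3, -4, -1, 0, 0, 1, 2],
  [0, 0, 0, 0, 0, 0, 0, 0, 0, 0, 0, 0, 0, 0, 0, 0, 0, 0, 0, 0, 0, 0, 0, -18, 0, 0, 0, 0, 0, 0, 18, 0, 0, 0, 0],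
  [-1, 0, 0, -1, 1, 0, -9, 0, -1, 0, -1, 2, 5, 0, 0, 0, 1, -11, -7, -2, 10, -1, -1, -4, 0, 1, 0, 0, 15, 4, 1, 0, 0, -1, -2],
  [1, 0, 0, 1, -1, 0, -9, 0, 1, 0, 1, -2, -5, 0, 0, 0, -1, 11, 7, 2, -10, 1, 1, 4, 0, -1, 0, 0, -15, -4, -1, 0, 0, 1, 20],
  [0, 0, 0, 0, 0, 0, 0, 0, 0, 0, 0, 0, 0, 0, 0, 0, 0, 0, 0, 0, 0, 0, 0, 18, 0, 0, 0, 0, 0, 0, 0, 0, 0, 0, 0],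
  [1, 0, 0, 1, -1, 0, 9, 0, 1, 0, 1, -2, -5, 0, 0, 0, -1, -7, -11, 2, 8, 1, 1, 4, 0, -1, 0, 0, 3, 14, -1, 0, 0, 1, -16],
  [0, 0, 0, 0, 0, 0, 0, 0, 0, 0, 0, 0, 18, 0, 0, 0, 0, 0, 0, 0, 0, 0, 0, -18, 0, 0, 0, 0, 0, 0, 0, 0, 0, 0, 0]]

def Bz : Matrix (Fin 12 × Fin 3) (Fin 5 × Fin 7) ℤ :=
  Matrix.of fun cj ri => (Bdataz.getD (cj.1.val*3+cj.2.val) []).getD (ri.1.val*7+ri.2.val) 0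

set_option maxRecDepth 100000 in
set_option maxHeartbeats 8000000 in
theorem Hbigz_mul_Bz : Hbigz * Bz = (18 : ℤ) • 1 := by decide

lemma hH1 : H1 = H1z.map (Int.cast : ℤ → ℚ) := by decide
lemma hH2 : H2 = H2z.map (Int.cast : ℤ → ℚ) := by decide
lemma hH3 : H3 = H3z.map (Int.cast : ℤ → ℚ) := by decide
lemma hH4 : H4 = H4z.map (Int.cast : ℤ → ℚ) := by decide

lemma hzero : (0 : Matrix (Fin 7) (Fin 3) ℚ) = (0 : Matrix (Fin 7) (Fin 3) ℤ).map (Int.cast : ℤ → ℚ) := by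
  ext i j; simp

theorem Hbig_eq_map : Hbig = Hbigz.map (Int.cast : ℤ → ℚ) := by
  have hY : ∀ a c, Yblocks a c = (Yblocksz a c).map (Int.cast : ℤ → ℚ) := by
    intro a c
    fin_cases a <;> fin_cases c <;>
      simp only [Yblocks, Yblocksz, Matrix.cons_val', Matrix.cons_val_zero,
        Matrix.cons_val_one, Matrix.head_cons, Matrix.cons_val_fin_one,
        Matrix.empty_val', Matrix.head_fin_const, Fin.isValue,
        Matrix.cons_val_succ, hH1, hH2, hH3, hH4] <;>
      first | rfl | exact hzero
  ext ri cj
  simp only [Hbig, Hbigz, Matrix.map_apply, Matrix.of_apply, hY]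

theorem Hbig_full_row_rank : Hbig.rank = 35 := by
  have key : Hbig * ((18 : ℚ)⁻¹ • Bz.map (Int.cast : ℤ → ℚ)) = 1 := by
    have hc : (Int.cast : ℤ → ℚ) = ⇑(Int.castRingHom ℚ) := rfl
    rw [Matrix.mul_smul, Hbig_eq_map, hc, ← Matrix.map_mul, Hbigz_mul_Bz]
    ext i j
    by_cases h : i = j <;>
      simp [Matrix.map_apply, Matrix.smul_apply, Matrix.one_apply, h,
        Matrix.smul_one_eq_diagonal, Matrix.diagonal_apply]
  apply le_antisymm
  · simpa using Hbig.rank_le_card_height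
  · have h := Matrix.rank_mul_le_left Hbig ((18 : ℚ)⁻¹ • Bz.map (Int.cast : ℤ → ℚ))
    rw [key, Matrix.rank_one] at h
    simpa using h
end

section
/- With the matrices of the previous statement, the vectors V₁₂ = (1,0,0), V₁₃ = (0,1,0), V₁₄ = (0,0,−1), V₂₁ = (1,−1,0), V₂₃ = (0,−1,0), V₂₄ = (0,0,1), V₃₁ = (0,1,−1), V₃₂ = (0,1,0), V₃₄ = (1,0,1), V₄₁ = (1,1,−1), V₄₂ = (0,1,−1), V₄₃ = (0,−1,0) satisfy the five alignment equations: H₁V₁₂ + H₂V₂₁ + H₃V₃₄ + H₄V₄₃ = 0; H₁V₁₃ + H₃V₃₁ + H₃V₃₄ + H₄V₄₃ = 0; H₁V₁₄ + H₃V₃₄ + H₄V₄₁ + H₄V₄₃ = 0; H₂V₂₃ + H₃V₃₂ + H₃V₃₄ + H₄V₄₃ = 0; H₂V₂₄ + H₃V₃₄ + H₄V₄₂ + H₄V₄₃ = 0. -/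
open Matrix

def V12 : Fin 3 → ℚ := ![1, 0, 0]
def V13 : Fin 3 → ℚ := ![0, 1, 0]
def V14 : Fin 3 → ℚ := ![0, 0, -1]
def V21 : Fin 3 → ℚ := ![1, -1, 0]
def V23 : Fin 3 → ℚ := ![0, -1, 0]
def V24 : Fin 3 → ℚ := ![0, 0, 1]
def V31 : Fin 3 → ℚ := ![0, 1, -1]
def V32 : Fin 3 → ℚ := ![0, 1, 0]
def V34 : Fin 3 → ℚ := ![1, 0, 1]
def V41 : Fin 3 → ℚ := ![1, 1, -1]
def V42 : Fin 3 → ℚ := ![0, 1, -1]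
def V43 : Fin 3 → ℚ := ![0, -1, 0]

theorem alignment_equations_Y :
    H1 *ᵥ V12 + H2 *ᵥ V21 + H3 *ᵥ V34 + H4 *ᵥ V43 = 0 ∧
    H1 *ᵥ V13 + H3 *ᵥ V31 + H3 *ᵥ V34 + H4 *ᵥ V43 = 0 ∧
    H1 *ᵥ V14 + H3 *ᵥ V34 + H4 *ᵥ V41 + H4 *ᵥ V43 = 0 ∧
    H2 *ᵥ V23 + H3 *ᵥ V32 + H3 *ᵥ V34 + H4 *ᵥ V43 = 0 ∧
    H2 *ᵥ V24 + H3 *ᵥ V34 + H4 *ᵥ V42 + H4 *ᵥ V43 = 0 := by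
  refine ⟨?_, ?_, ?_, ?_, ?_⟩ <;>
  · funext i
    simp [H1, H2, H3, H4, V12, V13, V14, V21, V23, V24, V31, V32, V34, V41, V42, V43,
      mulVec, dotProduct, Fin.sum_univ_succ]
    fin_cases i <;> norm_num
end

section
/- With the matrices and beamforming vectors of the previous two statements, the 7×7 matrix G = [H₂V₂₁, H₃V₃₁, H₃V₃₂, H₃V₃₄, H₄V₄₁, H₄V₄₂, H₄V₄₃] is invertible (has nonzero determinant) over the rationals. -/
open Matrix

/-- The 7×7 matrix whose columns are the seven received directions F₁,…,F₇. -/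
def G : Matrix (Fin 7) (Fin 7) ℚ :=
  Matrix.of fun i j =>
    ![H2 *ᵥ V21, H3 *ᵥ V31, H3 *ᵥ V32, H3 *ᵥ V34, H4 *ᵥ V41, H4 *ᵥ V42, H4 *ᵥ V43] j i

/-- An explicit right inverse of `G`. -/
def Binv : Matrix (Fin 7) (Fin 7) ℚ :=
  !![-1,0,0,1,0,0,0; 0,-1,0,0,0,0,1; 0,0,0,1,1,0,-1; -1,-1,1,1,1,-1,1;
     0,0,1,0,0,0,0; 0,0,0,0,0,-1,0; -1,-1,1,1,1,-1,0]

set_option maxRecDepth 4000 in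
set_option maxHeartbeats 1000000 in
theorem G_mul_Binv : G * Binv = 1 := by
  ext i j
  fin_cases i <;> fin_cases j <;>
    norm_num [G, Binv, H2, H3, H4, V21, V31, V32, V34, V41, V42, V43,
      Matrix.mul_apply, mulVec, dotProduct, Fin.sum_univ_succ, Matrix.one_apply] <;>
    rw [if_neg (by decide)]

theorem G_det_ne_zero : G.det ≠ 0 := Matrix.det_ne_zero_of_right_inverse G_mul_Binv
end

section
/- Let F₁,…,F₇ be linearly independent vectors in a 7-dimensional vector space over a field, and consider the twelve vectors: v₁₂ = −(F₁+F₄+F₇), v₁₃ = −(F₂+F₄+F₇), v₁₄ = −(F₄+F₅+F₇), v₂₁ = F₁, v₂₃ = −(F₃+F₄+F₇), v₂₄ = −(F₄+F₆+F₇), v₃₁ = F₂, v₃₂ = F₃, v₃₄ = F₄, v₄₁ = F₅, v₄₂ = F₆, v₄₃ = F₇. Then the ten vectors {vₖⱼ : (k,j) ∉ {(1,2),(2,1)}} span exactly the 6-dimensional subspace span{F₂,F₃,F₄,F₅,F₆,F₇}, and neither v₁₂ nor v₂₁ lies in that subspace. -/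
open Submodule

/-- The twelve arrival directions at the relay, indexed by (sender, receiver) in Fin 4
(diagonal entries are unused and set to 0). -/
def arrival {E : Type*} [AddCommGroup E] (F : Fin 7 → E) :
    Fin 4 → Fin 4 → E :=
  ![![0, -(F 0 + F 3 + F 6), -(F 1 + F 3 + F 6), -(F 3 + F 4 + F 6)],
    ![F 0, 0, -(F 2 + F 3 + F 6), -(F 3 + F 5 + F 6)],
    ![F 1, F 2, 0, F 3],
    ![F 4, F 5, F 6, 0]]

theorem pair_12_21_protection {K E : Type*} [Field K] [AddCommGroup E] [Module K E]
    [FiniteDimensional K E] (hdim : Module.finrank K E = 7)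
    (F : Fin 7 → E) (hF : LinearIndependent K F) :
    span K {x | ∃ k l : Fin 4, k ≠ l ∧ (k, l) ≠ ((0 : Fin 4), (1 : Fin 4)) ∧
        (k, l) ≠ ((1 : Fin 4), (0 : Fin 4)) ∧ x = arrival F k l} =
      span K ({F 1, F 2, F 3, F 4, F 5, F 6} : Set E) ∧
    arrival F 0 1 ∉ span K ({F 1, F 2, F 3, F 4, F 5, F 6} : Set E) ∧
    arrival F 1 0 ∉ span K ({F 1, F 2, F 3, F 4, F 5, F 6} : Set E) := by
  set S := span K ({F 1, F 2, F 3, F 4, F 5, F 6} : Set E) with hS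
  have h1 : F 1 ∈ S := subset_span (by simp)
  have h2 : F 2 ∈ S := subset_span (by simp)
  have h3 : F 3 ∈ S := subset_span (by simp)
  have h4 : F 4 ∈ S := subset_span (by simp)
  have h5 : F 5 ∈ S := subset_span (by simp)
  have h6 : F 6 ∈ S := subset_span (by simp)
  have himg : ({F 1, F 2, F 3, F 4, F 5, F 6} : Set E)
      = F '' ({1, 2, 3, 4, 5, 6} : Set (Fin 7)) := by
    simp [Set.image_insert_eq]
  have h0 : F 0 ∉ S := by
    rw [hS, himg]
    exact hF.notMem_span_image (by decide)
  refine ⟨le_antisymm (span_le.2 ?_) (span_le.2 ?_), ?_, ?_⟩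
  · rintro x ⟨k, l, hkl, hne1, hne2, rfl⟩
    fin_cases k <;> fin_cases l <;>
    first
      | exact absurd rfl hkl
      | exact absurd rfl hne1
      | exact absurd rfl hne2
      | exact h1 | exact h2 | exact h3 | exact h4 | exact h5 | exact h6
      | exact neg_mem (add_mem (add_mem h1 h3) h6)
      | exact neg_mem (add_mem (add_mem h3 h4) h6)
      | exact neg_mem (add_mem (add_mem h2 h3) h6)
      | exact neg_mem (add_mem (add_mem h3 h5) h6)
  · rintro x hx
    simp only [Set.mem_insert_iff, Set.mem_singleton_iff] at hx
    rcases hx with rfl | rfl | rfl | rfl | rfl | rfl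
    · exact subset_span ⟨2, 0, by decide, by decide, by decide, rfl⟩
    · exact subset_span ⟨2, 1, by decide, by decide, by decide, rfl⟩
    · exact subset_span ⟨2, 3, by decide, by decide, by decide, rfl⟩
    · exact subset_span ⟨3, 0, by decide, by decide, by decide, rfl⟩
    · exact subset_span ⟨3, 1, by decide, by decide, by decide, rfl⟩
    · exact subset_span ⟨3, 2, by decide, by decide, by decide, rfl⟩
  · intro h
    apply h0
    have : F 0 = -(arrival F 0 1) - F 3 - F 6 := by
      show F 0 = -(-(F 0 + F 3 + F 6)) - F 3 - F 6; abel
    rw [this]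
    exact sub_mem (sub_mem (neg_mem h) h3) h6
  · intro h
    apply h0
    have : F 0 = arrival F 1 0 := rfl
    rwa [this]
end

section
/- Let F₁,…,F₇ be linearly independent vectors in a 7-dimensional vector space, with the twelve vectors vₖⱼ defined as in the previous statement. Then the ten vectors {vₖⱼ : (k,j) ∉ {(3,4),(4,3)}} span the 6-dimensional subspace span{F₁, F₂, F₃, F₅, F₆, F₄+F₇}, and neither v₃₄ = F₄ nor v₄₃ = F₇ lies in this subspace. -/
open Submodule

theorem pair_34_43_protection {K E : Type*} [Field K] [AddCommGroup E] [Module K E]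
    [FiniteDimensional K E] (hdim : Module.finrank K E = 7)
    (F : Fin 7 → E) (hF : LinearIndependent K F) :
    span K {x | ∃ k l : Fin 4, k ≠ l ∧ (k, l) ≠ ((2 : Fin 4), (3 : Fin 4)) ∧
        (k, l) ≠ ((3 : Fin 4), (2 : Fin 4)) ∧ x = arrival F k l} =
      span K ({F 0, F 1, F 2, F 4, F 5, F 3 + F 6} : Set E) ∧
    arrival F 2 3 ∉ span K ({F 0, F 1, F 2, F 4, F 5, F 3 + F 6} : Set E) ∧
    arrival F 3 2 ∉ span K ({F 0, F 1, F 2, F 4, F 5, F 3 + F 6} : Set E) := by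
  have hcard : Fintype.card (Fin 7) = Module.finrank K E := by simp [hdim]
  set B := basisOfLinearIndependentOfCardEqFinrank hF hcard with hBdef
  have hB : ⇑B = F := coe_basisOfLinearIndependentOfCardEqFinrank hF hcard
  have key : ∀ j i : Fin 7, B.repr (F i) j = if i = j then 1 else 0 := by
    intro j i
    rw [← hB]
    simp [Module.Basis.repr_self, Finsupp.single_apply]
  set φ : E →ₗ[K] K := B.coord 3 - B.coord 6 with hφdef
  have hφ : ∀ i, φ (F i) = (if i = (3 : Fin 7) then (1:K) else 0) -
      (if i = (6 : Fin 7) then (1:K) else 0) := by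
    intro i
    simp [hφdef, Module.Basis.coord_apply, key]
  set S : Set E := {F 0, F 1, F 2, F 4, F 5, F 3 + F 6} with hSdef
  set W := span K S with hWdef
  have hSker : W ≤ LinearMap.ker φ := by
    rw [hWdef, span_le]
    rintro x (rfl | rfl | rfl | rfl | rfl | rfl) <;>
      simp [LinearMap.mem_ker, hφ]
  -- generator memberships
  have m0 : F 0 ∈ W := subset_span (by simp [hSdef])
  have m1 : F 1 ∈ W := subset_span (by simp [hSdef])
  have m2 : F 2 ∈ W := subset_span (by simp [hSdef])
  have m4 : F 4 ∈ W := subset_span (by simp [hSdef])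
  have m5 : F 5 ∈ W := subset_span (by simp [hSdef])
  have m36 : F 3 + F 6 ∈ W := subset_span (by simp [hSdef])
  refine ⟨le_antisymm ?_ ?_, ?_, ?_⟩
  · rw [span_le]
    rintro x ⟨k, l, hkl, h1, h2, rfl⟩
    fin_cases k <;> fin_cases l <;>
      first
      | exact absurd rfl hkl
      | exact absurd rfl h1
      | exact absurd rfl h2
      | (show arrival F _ _ ∈ W
         simp only [arrival, Matrix.cons_val_zero, Matrix.cons_val_one, Matrix.head_cons,
           Matrix.cons_val_two, Matrix.tail_cons, Matrix.cons_val_three,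
           Matrix.cons_val_fin_one, Matrix.cons_val']
         first
         | exact m0 | exact m1 | exact m2 | exact m4 | exact m5
         | (rw [show -(F 0 + F 3 + F 6) = -(F 0 + (F 3 + F 6)) by abel]
            exact neg_mem (add_mem m0 m36))
         | (rw [show -(F 1 + F 3 + F 6) = -(F 1 + (F 3 + F 6)) by abel]
            exact neg_mem (add_mem m1 m36))
         | (rw [show -(F 2 + F 3 + F 6) = -(F 2 + (F 3 + F 6)) by abel]
            exact neg_mem (add_mem m2 m36))
         | (rw [show -(F 3 + F 4 + F 6) = -(F 4 + (F 3 + F 6)) by abel]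
            exact neg_mem (add_mem m4 m36))
         | (rw [show -(F 3 + F 5 + F 6) = -(F 5 + (F 3 + F 6)) by abel]
            exact neg_mem (add_mem m5 m36)))
  · rw [span_le]
    have mem : ∀ (k l : Fin 4), k ≠ l → (k, l) ≠ ((2 : Fin 4), (3 : Fin 4)) →
        (k, l) ≠ ((3 : Fin 4), (2 : Fin 4)) →
        arrival F k l ∈ span K {x : E | ∃ k l : Fin 4, k ≠ l ∧
          (k, l) ≠ ((2 : Fin 4), (3 : Fin 4)) ∧
          (k, l) ≠ ((3 : Fin 4), (2 : Fin 4)) ∧ x = arrival F k l} := by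
      intro k l h1 h2 h3
      exact subset_span ⟨k, l, h1, h2, h3, rfl⟩
    rintro x (rfl | rfl | rfl | rfl | rfl | rfl)
    · simpa [arrival] using mem 1 0 (by decide) (by decide) (by decide)
    · simpa [arrival] using mem 2 0 (by decide) (by decide) (by decide)
    · simpa [arrival] using mem 2 1 (by decide) (by decide) (by decide)
    · simpa [arrival] using mem 3 0 (by decide) (by decide) (by decide)
    · simpa [arrival] using mem 3 1 (by decide) (by decide) (by decide)
    · have ha := mem 0 1 (by decide) (by decide) (by decide)
      have hb := mem 1 0 (by decide) (by decide) (by decide)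
      have ha' : -(F 0 + F 3 + F 6) ∈ span K {x : E | ∃ k l : Fin 4, k ≠ l ∧
          (k, l) ≠ ((2 : Fin 4), (3 : Fin 4)) ∧
          (k, l) ≠ ((3 : Fin 4), (2 : Fin 4)) ∧ x = arrival F k l} := by
        simpa [arrival] using ha
      have hb' : F 0 ∈ span K {x : E | ∃ k l : Fin 4, k ≠ l ∧
          (k, l) ≠ ((2 : Fin 4), (3 : Fin 4)) ∧
          (k, l) ≠ ((3 : Fin 4), (2 : Fin 4)) ∧ x = arrival F k l} := by
        simpa [arrival] using hb
      have : F 3 + F 6 = -(-(F 0 + F 3 + F 6)) - F 0 := by abel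
      rw [this]
      exact sub_mem (neg_mem ha') hb'
  · intro h
    have h23 : arrival F 2 3 = F 3 := by simp [arrival]
    have := hSker h
    rw [LinearMap.mem_ker, h23, hφ] at this
    simp at this
  · intro h
    have h32 : arrival F 3 2 = F 6 := by simp [arrival]
    have := hSker h
    rw [LinearMap.mem_ker, h32, hφ] at this
    simp at this
end
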